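/- The formula □*¬(φ_0 ∧ φ_1) → [(◇φ_0 → ◇(φ_0 ∧ ¬◇(¬φ_0 ∧ ◇φ_0))) → (◇φ_0 → ◇(φ_0 ∧ ¬◇(φ_1 ∧ ◇φ_0)))] is valid in all weakly transitive frames. -/
import Mathlib


/-- Modal formulas: variables, ⊤, ¬, ∧, □. -/
inductive Fml : Type
  | var : ℕ → Fml
  | top : Fml
  | neg : Fml → Fml
  | and : Fml → Fml → Fml
  | box : Fml → Fml
deriving DecidableEq

namespace Fml
/-- Material implication, defined from ¬ and ∧. -/
def imp (φ ψ : Fml) : Fml := .neg (.and φ (.neg ψ))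
/-- Disjunction. -/
def or (φ ψ : Fml) : Fml := .neg (.and (.neg φ) (.neg ψ))
/-- ◇φ := ¬□¬φ. -/
def dia (φ : Fml) : Fml := .neg (.box (.neg φ))
/-- □*φ := φ ∧ □φ. -/
def boxs (φ : Fml) : Fml := .and φ (.box φ)
/-- ◇*φ := φ ∨ ◇φ. -/
def dias (φ : Fml) : Fml := Fml.or φ (dia φ)
end Fml

/-- Kripke satisfaction. -/
def sat {W : Type} (R : W → W → Prop) (V : ℕ → Set W) : W → Fml → Prop
  | x, .var p => x ∈ V p
  | _, .top => True
  | x, .neg φ => ¬ sat R V x φ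
  | x, .and φ ψ => sat R V x φ ∧ sat R V x ψ
  | x, .box φ => ∀ y, R x y → sat R V y φ

/-- P_n(φ0; φ1,...,φn): P_0(φ0) = ◇φ0, P_n(φ0,φ1,...,φn) = ◇(φ1 ∧ P_{n-1}(φ0,φ2,...,φn)). -/
def Pfml (φ0 : Fml) : List Fml → Fml
  | [] => φ0.dia
  | ψ :: rest => (Fml.and ψ (Pfml φ0 rest)).dia

/-- Conjunction of ¬(φ ∧ ψ) for ψ in the list. -/
def conjNeg (φ : Fml) : List Fml → Fml
  | [] => .top
  | ψ :: rest => .and (.neg (.and φ ψ)) (conjNeg φ rest)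

/-- D_n: pairwise disjointness conjunction ⋀_{i<j} ¬(φ_i ∧ φ_j). -/
def Dfml : List Fml → Fml
  | [] => .top
  | φ :: rest => .and (conjNeg φ rest) (Dfml rest)

/-- The scheme C_n instance on φ0,φ1,...,φn (φs = [φ1,...,φn]). -/
def Cfml (φ0 : Fml) (φs : List Fml) : Fml :=
  ((Dfml (φ0 :: φs)).boxs).imp ((φ0.dia).imp ((Fml.and φ0 (Fml.neg (Pfml φ0 φs))).dia))

/-- The scheme C_n* instance: as C_n but with ◇* in the consequent. -/
def CfmlStar (φ0 : Fml) (φs : List Fml) : Fml :=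
  ((Dfml (φ0 :: φs)).boxs).imp ((φ0.dia).imp ((Fml.and φ0 (Fml.neg (Pfml φ0 φs))).dias))

/-- An ascending R-chain. -/
def AscChain {W : Type} (R : W → W → Prop) (x : ℕ → W) : Prop := ∀ m, R (x m) (x (m+1))

/-- A strictly ascending R-chain. -/
def StrictAscChain {W : Type} (R : W → W → Prop) (x : ℕ → W) : Prop :=
  AscChain R x ∧ ∀ m, ¬ R (x (m+1)) (x m)

/-- The R-cluster of x. -/
def cluster {W : Type} (R : W → W → Prop) (x : W) : Set W := {y | x = y ∨ (R x y ∧ R y x)}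

/-- The frame has a cycle of length k (k ≥ 1): k distinct points x_0 R x_1 R ... R x_{k-1} R x_0. -/
def HasCycle {W : Type} (R : W → W → Prop) (k : ℕ) : Prop :=
  1 ≤ k ∧ ∃ x : ℕ → W, (∀ i j, i < k → j < k → x i = x j → i = j) ∧
    ∀ i < k, R (x i) (x ((i+1) % k))

/-- Circumference at most n: every cycle has length ≤ n. -/
def CircumLE {W : Type} (R : W → W → Prop) (n : ℕ) : Prop := ∀ k, HasCycle R k → k ≤ n

/-- The frame (W,R) validates the scheme C_n. -/
def ValidatesCn {W : Type} (R : W → W → Prop) (n : ℕ) : Prop :=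
  ∀ (V : ℕ → Set W) (x : W) (φ0 : Fml) (φs : List Fml), φs.length = n →
    sat R V x (Cfml φ0 φs)

/-- A Boolean valuation on formulas (box-formulas and variables as atoms). -/
def BoolEval (w : Fml → Bool) : Prop :=
  w .top = true ∧ (∀ φ, w (.neg φ) = !w φ) ∧ (∀ φ ψ, w (.and φ ψ) = (w φ && w ψ))

/-- Propositional tautologies. -/
def Tautology (φ : Fml) : Prop := ∀ w, BoolEval w → w φ = true

/-- Theorems of the smallest normal modal logic containing the axiom set Ax. -/
inductive Prov (Ax : Set Fml) : Fml → Prop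
  | taut {φ} : Tautology φ → Prov Ax φ
  | kax (φ ψ) : Prov Ax ((Fml.box (φ.imp ψ)).imp ((Fml.box φ).imp (Fml.box ψ)))
  | ax {φ} : φ ∈ Ax → Prov Ax φ
  | mp {φ ψ} : Prov Ax (φ.imp ψ) → Prov Ax φ → Prov Ax ψ
  | nec {φ} : Prov Ax φ → Prov Ax (.box φ)

/-- All instances of the transitivity scheme 4. -/
def Ax4 : Set Fml := {χ | ∃ φ, χ = (Fml.box φ).imp (Fml.box (Fml.box φ))}

/-- Axioms of K4C_n: scheme 4 together with all instances of scheme C_n. -/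
def AxK4C (n : ℕ) : Set Fml :=
  Ax4 ∪ {χ | ∃ (φ0 : Fml) (φs : List Fml), φs.length = n ∧ χ = Cfml φ0 φs}

/-- the formula
□*¬(φ0 ∧ φ1) → [(◇φ0 → ◇(φ0 ∧ ¬◇(¬φ0 ∧ ◇φ0))) → (◇φ0 → ◇(φ0 ∧ ¬◇(φ1 ∧ ◇φ0)))]
is valid in all weakly transitive frames. -/
theorem stmt8 {W : Type} (R : W → W → Prop)
    (hwt : ∀ x y z : W, R x y → R y z → R x z ∨ x = z)
    (V : ℕ → Set W) (φ0 φ1 : Fml) (x : W) :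
    sat R V x
      (((Fml.neg (Fml.and φ0 φ1)).boxs).imp
        ((((φ0.dia).imp ((Fml.and φ0 (Fml.neg ((Fml.and (Fml.neg φ0) φ0.dia).dia))).dia))).imp
          ((φ0.dia).imp ((Fml.and φ0 (Fml.neg ((Fml.and φ1 φ0.dia).dia))).dia)))) := by
  simp only [sat, Fml.imp, Fml.dia, Fml.boxs, not_and, not_not, not_forall, not_exists]
  intro hbs hmid hdia
  obtain ⟨hx, hbox⟩ := hbs
  obtain ⟨y, hxy, hy0, hyst⟩ := hmid hdia
  refine ⟨y, hxy, hy0, ?_⟩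
  intro z hyz hz1 hzd
  have hz0 : ¬ sat R V z φ0 := by
    rcases hwt x y z hxy hyz with h | h
    · exact fun h0 => hbox z h h0 hz1
    · exact fun h0 => hx (h ▸ h0) (h ▸ hz1)
  exact hyst z hyz hz0 hzd
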